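/- arXiv:2103.13010 — 6 statements merged into one kernel-verified Lean document; each statement's English description precedes it below -/
import Mathlib

section
/- Let U = { dbar in R^N : dbar_j = d_j + b_j v_j for some v with sum_j |v_j| <= Gamma and |v_j| <= 1 for all j }. Then for binary x : N -> {0,1}, the condition 'sum_j dbar_j x_j <= s for all dbar in U' is equivalent to 'sum_j d_j x_j + max over subsets R of N with |R| <= Gamma of sum_{j in R} b_j x_j <= s'. -/
/-!
Substituting `dbar = d + b v`, the robust constraint says that `∑ v_j (b_j x_j)` stays below
`s - ∑ d_j x_j` for every fractional `v` with `|v_j| ≤ 1` and `∑ |v_j| ≤ Γ`. Choosing `v` the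
indicator of a best subset shows that the worst case is at least `robustMax`. Conversely, since
`b_j x_j ≥ 0` only `λ = |v|` matters, and the linear programme `max ∑ λ_j c_j` over `0 ≤ λ ≤ 1`,
`∑ λ_j ≤ Γ` has an integral optimum: if `R` is a best subset, its exchange-optimality yields a
threshold `t ≥ 0` separating the values of `c` on `R` from those off `R`, and `t` is a dual
certificate,
`∑ λ_j c_j = ∑ λ_j (c_j - t) + t ∑ λ_j ≤ ∑_{j ∈ R} (c_j - t) + t Γ ≤ ∑_{j ∈ R} c_j`.
-/

open Finset

/-- Worst-case (cardinality-constrained) extra term. -/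
noncomputable def robustMax {ι : Type*} [DecidableEq ι] (N : Finset ι) (Γ : ℕ) (f : ι → ℝ) : ℝ :=
  (N.powerset.filter fun R => R.card ≤ Γ).sup' ⟨∅, by simp⟩ fun R => ∑ j ∈ R, f j

namespace RobustMax

variable {ι : Type*} [DecidableEq ι] {N R : Finset ι} {Γ : ℕ} {c : ι → ℝ}

theorem sum_le_robustMax (hR : R ⊆ N) (hcard : #R ≤ Γ) : ∑ j ∈ R, c j ≤ robustMax N Γ c :=
  le_sup' (fun R => ∑ j ∈ R, c j) (mem_filter.mpr ⟨mem_powerset.mpr hR, hcard⟩)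

theorem exists_robustMax_eq_sum (N : Finset ι) (Γ : ℕ) (c : ι → ℝ) :
    ∃ R ⊆ N, #R ≤ Γ ∧ robustMax N Γ c = ∑ j ∈ R, c j := by
  obtain ⟨R, hR, hmax⟩ := exists_mem_eq_sup' (s := N.powerset.filter fun R => #R ≤ Γ)
    ⟨∅, by simp⟩ fun R => ∑ j ∈ R, c j
  rw [mem_filter, mem_powerset] at hR
  exact ⟨R, hR.1, hR.2, hmax⟩

theorem nonneg_of_mem (hR : R ⊆ N) (hmax : robustMax N Γ c ≤ ∑ j ∈ R, c j) (hcard : #R ≤ Γ)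
    {i : ι} (hi : i ∈ R) : 0 ≤ c i := by
  have := sum_le_robustMax (c := c) ((erase_subset i R).trans hR)
    ((card_erase_le).trans hcard)
  linarith [sum_erase_add R c hi]

theorem nonpos_of_card_lt (hR : R ⊆ N) (hmax : robustMax N Γ c ≤ ∑ j ∈ R, c j)
    {j : ι} (hj : j ∈ N \ R) (hlt : #R < Γ) : c j ≤ 0 := by
  obtain ⟨hjN, hjR⟩ := mem_sdiff.mp hj
  have := sum_le_robustMax (c := c) (insert_subset hjN hR)
    ((card_insert_of_notMem hjR).trans_le hlt)
  linarith [sum_insert (f := c) hjR]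

theorem le_of_mem_of_mem_sdiff (hR : R ⊆ N) (hmax : robustMax N Γ c ≤ ∑ j ∈ R, c j)
    (hcard : #R ≤ Γ) {i j : ι} (hi : i ∈ R) (hj : j ∈ N \ R) : c j ≤ c i := by
  obtain ⟨hjN, hjR⟩ := mem_sdiff.mp hj
  have hjR' : j ∉ R.erase i := fun h => hjR (mem_of_mem_erase h)
  have hcard' : #(insert j (R.erase i)) ≤ Γ := by
    rw [card_insert_of_notMem hjR', card_erase_of_mem hi]
    have := card_pos.mpr ⟨i, hi⟩
    omega
  have := sum_le_robustMax (c := c) (insert_subset hjN ((erase_subset i R).trans hR)) hcard'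
  linarith [sum_insert (f := c) hjR', sum_erase_add R c hi]

theorem sum_mul_le_sum_of_threshold {t : ℝ} {lam : ι → ℝ} (hR : R ⊆ N) (ht : 0 ≤ t)
    (hin : ∀ i ∈ R, t ≤ c i) (hout : ∀ j ∈ N \ R, c j ≤ t)
    (hlam0 : ∀ j ∈ N, 0 ≤ lam j) (hlam1 : ∀ j ∈ N, lam j ≤ 1)
    (hsum : ∑ j ∈ N, lam j ≤ Γ) (hslack : t * Γ ≤ t * #R) :
    ∑ j ∈ N, lam j * c j ≤ ∑ j ∈ R, c j := by
  have hinside : ∑ j ∈ R, lam j * (c j - t) ≤ ∑ j ∈ R, (c j - t) :=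
    sum_le_sum fun i hi =>
      mul_le_of_le_one_left (sub_nonneg.mpr (hin i hi)) (hlam1 i (hR hi))
  have houtside : ∑ j ∈ N \ R, lam j * (c j - t) ≤ 0 :=
    sum_nonpos fun j hj =>
      mul_nonpos_of_nonneg_of_nonpos (hlam0 j (mem_sdiff.mp hj).1) (sub_nonpos.mpr (hout j hj))
  calc ∑ j ∈ N, lam j * c j = ∑ j ∈ N, lam j * (c j - t) + t * ∑ j ∈ N, lam j := by
        rw [mul_sum, ← sum_add_distrib]; exact sum_congr rfl fun j _ => by ring
    _ = ∑ j ∈ N \ R, lam j * (c j - t) + ∑ j ∈ R, lam j * (c j - t) + t * ∑ j ∈ N, lam j := by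
        rw [sum_sdiff hR]
    _ ≤ ∑ j ∈ R, (c j - t) + t * Γ := by gcongr; linarith
    _ ≤ ∑ j ∈ R, c j := by rw [sum_sub_distrib, sum_const, nsmul_eq_mul]; linarith

theorem sum_mul_le_robustMax {lam : ι → ℝ} (hlam0 : ∀ j ∈ N, 0 ≤ lam j)
    (hlam1 : ∀ j ∈ N, lam j ≤ 1) (hsum : ∑ j ∈ N, lam j ≤ Γ) :
    ∑ j ∈ N, lam j * c j ≤ robustMax N Γ c := by
  obtain ⟨R, hR, hcard, hmax⟩ := exists_robustMax_eq_sum N Γ c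
  set t := (N \ R).fold max 0 c
  have ht : 0 ≤ t := (le_fold_max 0).mpr (Or.inl le_rfl)
  have hout : ∀ j ∈ N \ R, c j ≤ t := fun j hj => (le_fold_max _).mpr (Or.inr ⟨j, hj, le_rfl⟩)
  have hin : ∀ i ∈ R, t ≤ c i := fun i hi =>
    (fold_max_le _).mpr ⟨nonneg_of_mem hR hmax.le hcard hi,
      fun j hj => le_of_mem_of_mem_sdiff hR hmax.le hcard hi hj⟩
  have hslack : t * Γ ≤ t * #R := by
    rcases hcard.lt_or_eq with hlt | heq
    · have : t = 0 := le_antisymm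
        ((fold_max_le _).mpr ⟨le_rfl, fun j hj => nonpos_of_card_lt hR hmax.le hj hlt⟩) ht
      simp [this]
    · rw [heq]
  rw [hmax]
  exact sum_mul_le_sum_of_threshold hR ht hin hout hlam0 hlam1 hsum hslack

theorem sum_mul_le_robustMax_of_abs_le {v : ι → ℝ} (hc : ∀ j ∈ N, 0 ≤ c j)
    (hv1 : ∀ j ∈ N, |v j| ≤ 1) (hvsum : ∑ j ∈ N, |v j| ≤ Γ) :
    ∑ j ∈ N, v j * c j ≤ robustMax N Γ c :=
  (sum_le_sum fun j hj => mul_le_mul_of_nonneg_right (le_abs_self (v j)) (hc j hj)).trans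
    (sum_mul_le_robustMax (fun j _ => abs_nonneg (v j)) hv1 hvsum)

theorem sum_ite_mem_mul (hR : R ⊆ N) (f : ι → ℝ) :
    ∑ j ∈ N, (if j ∈ R then 1 else 0) * f j = ∑ j ∈ R, f j := by
  simp only [ite_mul, one_mul, zero_mul]
  rw [sum_ite_mem, inter_eq_right.mpr hR]

theorem exists_abs_le_one_sum_mul_eq_robustMax (N : Finset ι) (Γ : ℕ) (c : ι → ℝ) :
    ∃ v : ι → ℝ, (∀ j ∈ N, |v j| ≤ 1) ∧ ∑ j ∈ N, |v j| ≤ Γ ∧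
      ∑ j ∈ N, v j * c j = robustMax N Γ c := by
  obtain ⟨R, hR, hcard, hmax⟩ := exists_robustMax_eq_sum N Γ c
  have habs : ∀ j, |(if j ∈ R then 1 else 0 : ℝ)| = (if j ∈ R then 1 else 0) * 1 := fun j => by
    split_ifs <;> simp
  refine ⟨fun j => if j ∈ R then 1 else 0, fun j _ => ?_, ?_, ?_⟩
  · rw [habs]; split_ifs <;> norm_num
  · rw [sum_congr rfl fun j _ => habs j, sum_ite_mem_mul hR]; simpa using hcard
  · rw [sum_ite_mem_mul hR, hmax]

end RobustMax

open RobustMax in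
theorem stmt1_general {ι : Type*} [DecidableEq ι] (N : Finset ι) (d b : ι → ℝ)
    (hb : ∀ j ∈ N, 0 ≤ b j)
    (Γ : ℕ) (s : ℝ) (x : ι → ℝ) (hx : ∀ j ∈ N, x j = 0 ∨ x j = 1) :
    (∀ dbar : ι → ℝ,
        (∃ v : ι → ℝ, (∀ j ∈ N, |v j| ≤ 1) ∧ ∑ j ∈ N, |v j| ≤ (Γ : ℝ) ∧
          ∀ j ∈ N, dbar j = d j + b j * v j) →
        ∑ j ∈ N, dbar j * x j ≤ s) ↔
      ∑ j ∈ N, d j * x j + robustMax N Γ (fun j => b j * x j) ≤ s := by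
  have hsplit : ∀ v : ι → ℝ, ∑ j ∈ N, (d j + b j * v j) * x j
      = ∑ j ∈ N, d j * x j + ∑ j ∈ N, v j * (b j * x j) := fun v => by
    rw [← sum_add_distrib]; exact sum_congr rfl fun j _ => by ring
  constructor
  · intro h
    obtain ⟨v, hv1, hvsum, hworst⟩ := exists_abs_le_one_sum_mul_eq_robustMax N Γ fun j => b j * x j
    have := h _ ⟨v, hv1, hvsum, fun j _ => rfl⟩
    rwa [hsplit, hworst] at this
  · rintro h dbar ⟨v, hv1, hvsum, hdbar⟩
    have hc : ∀ j ∈ N, 0 ≤ b j * x j := fun j hj =>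
      mul_nonneg (hb j hj) (by rcases hx j hj with h | h <;> simp [h])
    rw [sum_congr rfl fun j hj => by rw [hdbar j hj], hsplit]
    linarith [sum_mul_le_robustMax_of_abs_le hc hv1 hvsum]

/-- The Bertsimas–Sim uncertainty set condition is equivalent to the
cardinality-constrained worst-case constraint. -/
theorem stmt1 {ι : Type*} [DecidableEq ι] (N : Finset ι) (d b : ι → ℝ)
    (hd : ∀ j ∈ N, 0 ≤ d j) (hb : ∀ j ∈ N, 0 ≤ b j)
    (Γ : ℕ) (s : ℝ) (x : ι → ℝ) (hx : ∀ j ∈ N, x j = 0 ∨ x j = 1) :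
    (∀ dbar : ι → ℝ,
        (∃ v : ι → ℝ, (∀ j ∈ N, |v j| ≤ 1) ∧ ∑ j ∈ N, |v j| ≤ (Γ : ℝ) ∧
          ∀ j ∈ N, dbar j = d j + b j * v j) →
        ∑ j ∈ N, dbar j * x j ≤ s) ↔
      ∑ j ∈ N, d j * x j + robustMax N Γ (fun j => b j * x j) ≤ s :=
  stmt1_general N d b hb Γ s x hx
end

section
/- For binary x : N -> {0,1}, nonnegative b_j, and nonnegative integer Gamma, the value max over subsets R of N with |R| <= Gamma of sum_{j in R} b_j x_j equals the optimal value of the linear program: minimize Gamma*q + sum_j p_j subject to q + p_j >= b_j x_j for all j, p_j >= 0, q >= 0. -/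
/-!
Weak duality: summing `c j ≤ q + p j` over a set `R` with `#R ≤ Γ` bounds `∑ j ∈ R, c j` by
`Γ * q + ∑ j ∈ N, p j`. For the converse take a set `T` attaining `robustMax`. Exchanging single
elements shows that `c` is nonnegative on `T`, that every value of `c` on `N \ T` is at most every
value on `T`, and that those values are nonpositive if `#T < Γ`. Hence there is a threshold `q ≥ 0`
separating the two, with `q = 0` if `#T < Γ`, and `p j = max (c j - q) 0` makes the dual objective
equal to `∑ j ∈ T, c j`.
-/

open Finset

namespace RobustDuality

variable {ι : Type*} {N T : Finset ι} {Γ : ℕ} {c p : ι → ℝ} {q : ℝ}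

lemma sum_le_dual_objective {R : Finset ι} (hRN : R ⊆ N) (hR : R.card ≤ Γ)
    (hp : ∀ j ∈ N, 0 ≤ p j) (hq : 0 ≤ q) (hfeas : ∀ j ∈ N, c j ≤ q + p j) :
    ∑ j ∈ R, c j ≤ Γ * q + ∑ j ∈ N, p j :=
  calc ∑ j ∈ R, c j ≤ ∑ j ∈ R, (q + p j) := sum_le_sum fun j hj => hfeas j (hRN hj)
    _ = R.card * q + ∑ j ∈ R, p j := by rw [sum_add_distrib, sum_const, nsmul_eq_mul]
    _ ≤ Γ * q + ∑ j ∈ N, p j := by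
      gcongr
      exact fun j hj _ => hp j hj

lemma robustMax_le_dual_objective [DecidableEq ι] (hp : ∀ j ∈ N, 0 ≤ p j) (hq : 0 ≤ q)
    (hfeas : ∀ j ∈ N, c j ≤ q + p j) :
    robustMax N Γ c ≤ Γ * q + ∑ j ∈ N, p j :=
  sup'_le _ _ fun R hR => by
    rw [mem_filter, mem_powerset] at hR
    exact sum_le_dual_objective hR.1 hR.2 hp hq hfeas

def IsOptimalSet (N : Finset ι) (Γ : ℕ) (c : ι → ℝ) (T : Finset ι) : Prop :=
  T ⊆ N ∧ T.card ≤ Γ ∧ ∀ R ⊆ N, R.card ≤ Γ → ∑ j ∈ R, c j ≤ ∑ j ∈ T, c j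

lemma exists_isOptimalSet_sum_eq_robustMax [DecidableEq ι] (N : Finset ι) (Γ : ℕ) (c : ι → ℝ) :
    ∃ T, IsOptimalSet N Γ c T ∧ ∑ j ∈ T, c j = robustMax N Γ c := by
  obtain ⟨T, hT, hmax⟩ := exists_mem_eq_sup' (s := N.powerset.filter fun R => R.card ≤ Γ)
    ⟨∅, by simp⟩ fun R => ∑ j ∈ R, c j
  rw [mem_filter, mem_powerset] at hT
  refine ⟨T, ⟨hT.1, hT.2, fun R hRN hR => ?_⟩, hmax.symm⟩
  rw [← hmax]
  exact le_sup' (fun R => ∑ j ∈ R, c j) (by simpa [mem_filter, mem_powerset] using ⟨hRN, hR⟩)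

section Exchange

variable [DecidableEq ι]

lemma IsOptimalSet.nonneg_of_mem (hT : IsOptimalSet N Γ c T) {j : ι} (hj : j ∈ T) :
    0 ≤ c j := by
  obtain ⟨hTN, hTΓ, hopt⟩ := hT
  have := hopt (T.erase j) ((erase_subset j T).trans hTN) (card_erase_le.trans hTΓ)
  rw [← sum_erase_add T c hj] at this
  linarith

lemma IsOptimalSet.nonpos_of_mem_sdiff (hT : IsOptimalSet N Γ c T) (hlt : T.card < Γ)
    {k : ι} (hk : k ∈ N \ T) : c k ≤ 0 := by
  obtain ⟨hTN, -, hopt⟩ := hT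
  rw [mem_sdiff] at hk
  have := hopt (insert k T) (insert_subset hk.1 hTN) ((card_insert_le k T).trans hlt)
  rw [sum_insert hk.2] at this
  linarith

lemma IsOptimalSet.le_of_mem_sdiff (hT : IsOptimalSet N Γ c T) {j k : ι} (hj : j ∈ T)
    (hk : k ∈ N \ T) : c k ≤ c j := by
  obtain ⟨hTN, hTΓ, hopt⟩ := hT
  rw [mem_sdiff] at hk
  have hkT : k ∉ T.erase j := fun h => hk.2 (mem_of_mem_erase h)
  have := hopt (insert k (T.erase j))
    (insert_subset hk.1 ((erase_subset j T).trans hTN))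
    (by rw [card_insert_of_notMem hkT, card_erase_add_one hj]; exact hTΓ)
  rw [sum_insert hkT, ← sum_erase_add T c hj] at this
  linarith

end Exchange

lemma exists_nonneg_separating (hT : ∀ j ∈ T, 0 ≤ c j) (hle : ∀ j ∈ T, ∀ k ∈ N, c k ≤ c j) :
    ∃ q, 0 ≤ q ∧ (∀ j ∈ T, q ≤ c j) ∧ ∀ k ∈ N, c k ≤ q := by
  rcases T.eq_empty_or_nonempty with rfl | hne
  · refine ⟨∑ k ∈ N, max (c k) 0, sum_nonneg fun k _ => le_max_right _ _, by simp, fun k hk => ?_⟩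
    exact (le_max_left _ _).trans (single_le_sum (fun i _ => le_max_right (c i) 0) hk)
  · obtain ⟨i, hi, hq⟩ := exists_mem_eq_inf' hne c
    exact ⟨T.inf' hne c, hq ▸ hT i hi, fun j hj => inf'_le c hj,
      fun k hk => le_inf' hne c fun j hj => hle j hj k hk⟩

lemma IsOptimalSet.exists_threshold [DecidableEq ι] (hT : IsOptimalSet N Γ c T) :
    ∃ q, 0 ≤ q ∧ (∀ j ∈ T, q ≤ c j) ∧ (∀ k ∈ N \ T, c k ≤ q) ∧ (T.card : ℝ) * q = Γ * q := by
  rcases hT.2.1.lt_or_eq with hlt | heq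
  · exact ⟨0, le_rfl, fun j => hT.nonneg_of_mem, fun k => hT.nonpos_of_mem_sdiff hlt, by simp⟩
  · obtain ⟨q, hq, hqT, hqN⟩ := exists_nonneg_separating (N := N \ T)
      (fun j => hT.nonneg_of_mem) (fun j hj k => hT.le_of_mem_sdiff hj)
    exact ⟨q, hq, hqT, hqN, by rw [heq]⟩

lemma dual_feasible_and_sum_eq_of_threshold [DecidableEq ι] (hTN : T ⊆ N) (hq : 0 ≤ q)
    (hqT : ∀ j ∈ T, q ≤ c j) (hqN : ∀ k ∈ N \ T, c k ≤ q) (hΓ : (T.card : ℝ) * q = Γ * q) :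
    (∀ j ∈ N, 0 ≤ max (c j - q) 0) ∧ 0 ≤ q ∧ (∀ j ∈ N, c j ≤ q + max (c j - q) 0) ∧
      ∑ j ∈ T, c j = Γ * q + ∑ j ∈ N, max (c j - q) 0 := by
  refine ⟨fun _ _ => le_max_right _ _, hq, fun j _ => by linarith [le_max_left (c j - q) 0], ?_⟩
  have hsum : ∑ j ∈ N, max (c j - q) 0 = ∑ j ∈ T, (c j - q) := by
    rw [← sum_subset hTN fun k hk hkT =>
      max_eq_right (sub_nonpos.2 (hqN k (mem_sdiff.2 ⟨hk, hkT⟩)))]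
    exact sum_congr rfl fun j hj => max_eq_left (sub_nonneg.2 (hqT j hj))
  rw [hsum, sum_sub_distrib, sum_const, nsmul_eq_mul, hΓ]
  ring

theorem isLeast_dual_objective_robustMax [DecidableEq ι] (N : Finset ι) (Γ : ℕ) (c : ι → ℝ) :
    IsLeast {t : ℝ | ∃ p : ι → ℝ, ∃ q : ℝ, (∀ j ∈ N, 0 ≤ p j) ∧ 0 ≤ q ∧
        (∀ j ∈ N, c j ≤ q + p j) ∧ t = (Γ : ℝ) * q + ∑ j ∈ N, p j} (robustMax N Γ c) := by
  refine ⟨?_, fun t ⟨p, q, hp, hq, hfeas, ht⟩ => ht ▸ robustMax_le_dual_objective hp hq hfeas⟩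
  obtain ⟨T, hT, hTmax⟩ := exists_isOptimalSet_sum_eq_robustMax N Γ c
  obtain ⟨q, hq, hqT, hqN, hΓ⟩ := hT.exists_threshold
  obtain ⟨hp, hq, hfeas, hval⟩ := dual_feasible_and_sum_eq_of_threshold hT.1 hq hqT hqN hΓ
  exact ⟨_, q, hp, hq, hfeas, hTmax ▸ hval⟩

end RobustDuality

theorem stmt2_general {ι : Type*} [DecidableEq ι] (N : Finset ι) (b : ι → ℝ)
    (Γ : ℕ) (x : ι → ℝ) :
    IsLeast {t : ℝ | ∃ p : ι → ℝ, ∃ q : ℝ, (∀ j ∈ N, 0 ≤ p j) ∧ 0 ≤ q ∧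
        (∀ j ∈ N, b j * x j ≤ q + p j) ∧ t = (Γ : ℝ) * q + ∑ j ∈ N, p j}
      (robustMax N Γ fun j => b j * x j) :=
  RobustDuality.isLeast_dual_objective_robustMax N Γ fun j => b j * x j

/-- The worst-case term equals the optimal value of the dual LP
`min Γ q + ∑ p` s.t. `q + p_j ≥ b_j x_j`, `p ≥ 0`, `q ≥ 0`. -/
theorem stmt2 {ι : Type*} [DecidableEq ι] (N : Finset ι) (b : ι → ℝ)
    (hb : ∀ j ∈ N, 0 ≤ b j) (Γ : ℕ) (hΓ : Γ ≤ N.card)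
    (x : ι → ℝ) (hx : ∀ j ∈ N, x j = 0 ∨ x j = 1) :
    IsLeast {t : ℝ | ∃ p : ι → ℝ, ∃ q : ℝ, (∀ j ∈ N, 0 ≤ p j) ∧ 0 ≤ q ∧
        (∀ j ∈ N, b j * x j ≤ q + p j) ∧ t = (Γ : ℝ) * q + ∑ j ∈ N, p j}
      (robustMax N Γ fun j => b j * x j) :=
  stmt2_general N b Γ x
end

section
/- Assume b_1 >= b_2 >= ... >= b_n >= b_{n+1} = 0. Define C = { x in {0,1}^n : sum_j d_j x_j + max_{R subset N, |R| <= Gamma} sum_{j in R} b_j x_j <= s } and, for each l in {Gamma, Gamma+1, ..., n-1, n+1}, define C_l = { x in {0,1}^n : sum_j d_j x_j + sum_{j <= min(l,n)} (b_j - b_l) x_j <= s - Gamma * b_l }. Then C equals the union of the C_l over l in {Gamma, Gamma+1, ..., n-1, n+1}. -/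
/-!
For binary `x`, the inner maximum `max_{|R| ≤ Γ} ∑_{j ∈ R} b_j x_j` is the value of a linear
program whose dual is `min_{θ ≥ 0} Γ θ + ∑_j (b_j x_j - θ)⁺`. Weak duality at `θ = b_l` shows
that the nominal constraint of `C_l` implies the robust one, because for sorted `b` the dual
objective at `θ = b_l` is exactly `Γ b_l + ∑_{j ≤ l} (b_j - b_l) x_j`. Conversely, if more than
`Γ` items are packed, choose `l < n` such that exactly `Γ` packed items have index `≤ l`; then
the nominal term of `C_l` is the total deviation of those `Γ` items, hence at most the robust
maximum. If at most `Γ` items are packed, `l = n + 1` does the same job.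
-/

open Finset

section robustMax

variable {ι : Type*} [DecidableEq ι] {N : Finset ι} {Γ : ℕ} {f : ι → ℝ}

theorem sum_le_robustMax {R : Finset ι} (hRN : R ⊆ N) (hR : #R ≤ Γ) :
    ∑ j ∈ R, f j ≤ robustMax N Γ f :=
  le_sup' (fun R => ∑ j ∈ R, f j) (mem_filter.2 ⟨mem_powerset.2 hRN, hR⟩)

theorem robustMax_le {a : ℝ} (h : ∀ R ⊆ N, #R ≤ Γ → ∑ j ∈ R, f j ≤ a) :
    robustMax N Γ f ≤ a :=
  sup'_le _ _ fun R hR => by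
    rw [mem_filter, mem_powerset] at hR
    exact h R hR.1 hR.2

theorem robustMax_le_mul_add_sum_posPart {θ : ℝ} (hθ : 0 ≤ θ) :
    robustMax N Γ f ≤ Γ * θ + ∑ j ∈ N, (f j - θ)⁺ :=
  robustMax_le fun R hRN hR => calc
    ∑ j ∈ R, f j ≤ ∑ j ∈ R, (θ + (f j - θ)⁺) :=
      sum_le_sum fun j _ => by linarith [le_posPart (f j - θ)]
    _ = #R * θ + ∑ j ∈ R, (f j - θ)⁺ := by rw [sum_add_distrib, sum_const, nsmul_eq_mul]
    _ ≤ Γ * θ + ∑ j ∈ N, (f j - θ)⁺ := by gcongr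

theorem sum_mul_le_robustMax_of_binary {A : Finset ι} {x : ι → ℝ} (hAN : A ⊆ N)
    (hx : ∀ j ∈ A, x j = 0 ∨ x j = 1) (hA : #{j ∈ A | x j = 1} ≤ Γ) :
    ∑ j ∈ A, f j * x j ≤ robustMax N Γ (fun j => f j * x j) := by
  rw [← sum_filter_of_ne fun j hj hne => (hx j hj).resolve_left (right_ne_zero_of_mul hne)]
  exact sum_le_robustMax ((filter_subset _ _).trans hAN) hA

end robustMax

theorem sum_eq_card_filter_of_binary {ι : Type*} {A : Finset ι} {x : ι → ℝ}
    (hx : ∀ j ∈ A, x j = 0 ∨ x j = 1) : ∑ j ∈ A, x j = #{j ∈ A | x j = 1} := by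
  rw [card_filter, Nat.cast_sum]
  refine sum_congr rfl fun j hj => ?_
  rcases hx j hj with h | h <;> simp [h]

theorem exists_lt_eq_of_le_add_one {f : ℕ → ℕ} (hf : ∀ m, f (m + 1) ≤ f m + 1) {k n : ℕ}
    (h0 : f 0 ≤ k) (hn : k < f n) : ∃ m < n, f m = k := by
  induction n with
  | zero => omega
  | succ n ih =>
    by_cases h : k < f n
    · obtain ⟨m, hm, hmk⟩ := ih h
      exact ⟨m, by omega, hmk⟩
    · exact ⟨n, by omega, by have := hf n; omega⟩

theorem card_filter_Icc_add_one_le (p : ℕ → Prop) [DecidablePred p] (m : ℕ) :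
    #{j ∈ Icc 1 (m + 1) | p j} ≤ #{j ∈ Icc 1 m | p j} + 1 := by
  rw [← insert_Icc_right_eq_Icc_add_one (by omega), filter_insert]
  split_ifs
  · exact card_insert_le _ _
  · omega

theorem robustMax_le_nominal {n Γ l : ℕ} {b x : ℕ → ℝ}
    (hsort : ∀ j k, 1 ≤ j → j ≤ k → k ≤ n + 1 → b k ≤ b j) (hbn : b (n + 1) = 0)
    (hx : ∀ j ∈ Icc 1 n, x j = 0 ∨ x j = 1) (hl : l ∈ (insert (n + 1) (Ico Γ n) : Finset ℕ)) :
    robustMax (Icc 1 n) Γ (fun j => b j * x j)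
      ≤ Γ * b l + ∑ j ∈ Icc 1 (min l n), (b j - b l) * x j := by
  have hl' : (l = 0 → Γ = 0) ∧ l ≤ n + 1 := by
    rw [mem_insert, mem_Ico] at hl
    omega
  rcases Nat.eq_zero_or_pos l with rfl | hl0
  · obtain rfl := hl'.1 rfl
    refine robustMax_le fun R _ hR => ?_
    simp [card_eq_zero.1 (Nat.le_zero.1 hR)]
  have hbl : 0 ≤ b l := hbn ▸ hsort l (n + 1) hl0 hl'.2 le_rfl
  refine (robustMax_le_mul_add_sum_posPart hbl).trans_eq ?_
  have hIcc : Icc 1 (min l n) = {j ∈ Icc 1 n | j ≤ l} := by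
    ext j
    simp only [mem_Icc, mem_filter]
    omega
  rw [hIcc, sum_filter]
  congr 1
  refine sum_congr rfl fun j hj => ?_
  have hj := mem_Icc.1 hj
  rcases hx j (mem_Icc.2 hj) with h | h
  · simp [h, hbl]
  · split_ifs with hjl
    · simpa [h] using hsort j l hj.1 hjl hl'.2
    · simpa [h] using hsort l j hl0 (by omega) (by omega)

theorem exists_nominal_le_robustMax (n Γ : ℕ) {b x : ℕ → ℝ} (hbn : b (n + 1) = 0)
    (hx : ∀ j ∈ Icc 1 n, x j = 0 ∨ x j = 1) :
    ∃ l ∈ (insert (n + 1) (Ico Γ n) : Finset ℕ),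
      Γ * b l + ∑ j ∈ Icc 1 (min l n), (b j - b l) * x j
        ≤ robustMax (Icc 1 n) Γ (fun j => b j * x j) := by
  set packed : ℕ → ℕ := fun m => #{j ∈ Icc 1 m | x j = 1}
  have hx_le {m} (hm : m ≤ n) : ∀ j ∈ Icc 1 m, x j = 0 ∨ x j = 1 :=
    fun j hj => hx j (Icc_subset_Icc_right hm hj)
  have nominal_eq {m} (l) (hm : m ≤ n) :
      Γ * b l + ∑ j ∈ Icc 1 m, (b j - b l) * x j
        = ∑ j ∈ Icc 1 m, b j * x j + b l * (Γ - packed m) := by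
    rw [← sum_eq_card_filter_of_binary (hx_le hm)]
    simp only [sub_mul, sum_sub_distrib, ← mul_sum]
    ring
  by_cases hn : packed n ≤ Γ
  · refine ⟨n + 1, mem_insert_self _ _, ?_⟩
    rw [min_eq_right (Nat.le_succ n), nominal_eq _ le_rfl, hbn, zero_mul, add_zero]
    exact sum_mul_le_robustMax_of_binary subset_rfl hx hn
  · obtain ⟨m, hmn, hm⟩ := exists_lt_eq_of_le_add_one (card_filter_Icc_add_one_le _)
      (Nat.zero_le Γ) (not_le.1 hn)
    have hΓm : Γ ≤ m := hm ▸ (card_filter_le _ _).trans (Nat.card_Icc 1 m).le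
    refine ⟨m, mem_insert_of_mem (mem_Ico.2 ⟨hΓm, hmn⟩), ?_⟩
    rw [min_eq_left hmn.le, nominal_eq _ hmn.le, hm, sub_self, mul_zero, add_zero]
    exact sum_mul_le_robustMax_of_binary (Icc_subset_Icc_right hmn.le) (hx_le hmn.le) hm.le

theorem stmt3_general (n Γ : ℕ) (d b : ℕ → ℝ) (s : ℝ)
    (hsort : ∀ j k, 1 ≤ j → j ≤ k → k ≤ n + 1 → b k ≤ b j)
    (hbn : b (n + 1) = 0) :
    {x : ℕ → ℝ | (∀ j ∈ Finset.Icc 1 n, x j = 0 ∨ x j = 1) ∧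
        ∑ j ∈ Finset.Icc 1 n, d j * x j
          + robustMax (Finset.Icc 1 n) Γ (fun j => b j * x j) ≤ s} =
      ⋃ l ∈ (insert (n + 1) (Finset.Ico Γ n) : Finset ℕ),
        {x : ℕ → ℝ | (∀ j ∈ Finset.Icc 1 n, x j = 0 ∨ x j = 1) ∧
          ∑ j ∈ Finset.Icc 1 n, d j * x j
            + ∑ j ∈ Finset.Icc 1 (min l n), (b j - b l) * x j ≤ s - (Γ : ℝ) * b l} := by
  ext x
  simp only [Set.mem_ofPred_eq, Set.mem_iUnion, exists_prop]
  constructor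
  · rintro ⟨hx, hxs⟩
    obtain ⟨l, hl, hle⟩ := exists_nominal_le_robustMax n Γ hbn hx
    exact ⟨l, hl, hx, by linarith⟩
  · rintro ⟨l, hl, hx, hxs⟩
    have hle := robustMax_le_nominal hsort hbn hx hl
    exact ⟨hx, by linarith⟩

/-- Decomposition of the robust binary knapsack feasible set `C` into the
nominal knapsack feasible sets `C_l`, `l ∈ {Γ, Γ+1, …, n-1, n+1}` (Lee et al.). -/
theorem stmt3 (n Γ : ℕ) (d b : ℕ → ℝ) (s : ℝ)
    (hsort : ∀ j k, 1 ≤ j → j ≤ k → k ≤ n + 1 → b k ≤ b j)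
    (hbn : b (n + 1) = 0)
    (hd : ∀ j ∈ Finset.Icc 1 n, 0 ≤ d j)
    (hΓ : Γ ≤ n) (hs : 0 ≤ s) :
    {x : ℕ → ℝ | (∀ j ∈ Finset.Icc 1 n, x j = 0 ∨ x j = 1) ∧
        ∑ j ∈ Finset.Icc 1 n, d j * x j
          + robustMax (Finset.Icc 1 n) Γ (fun j => b j * x j) ≤ s} =
      ⋃ l ∈ (insert (n + 1) (Finset.Ico Γ n) : Finset ℕ),
        {x : ℕ → ℝ | (∀ j ∈ Finset.Icc 1 n, x j = 0 ∨ x j = 1) ∧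
          ∑ j ∈ Finset.Icc 1 n, d j * x j
            + ∑ j ∈ Finset.Icc 1 (min l n), (b j - b l) * x j ≤ s - (Γ : ℝ) * b l} :=
  stmt3_general n Γ d b s hsort hbn
end

section
/- Under the setup of the adjusted dual solution: if (lambda*, mu*) is an optimal dual solution of the restricted master problem with objective value Z_underline = sum_j lambda*_j - sum_i mu*_i, then Z_underline + sum_{i in M} nu*_i, where nu*_i = mu*_i + min{ f_i - xi^i(lambda*), 0 }, is a lower bound on the optimal value of the full linear programming master problem (MP). -/
/-!
Weak duality. Keep `λ*` and replace `μ*_i` by `max (ξ^i(λ*) - f_i) 0`: since `ξ^i(λ*)` is the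
largest reduced profit `∑_{j ∈ R} (λ*_j - c_{ij})` over `R ∈ S^i`, this pair satisfies every dual
constraint of the full master problem, and its dual value is
`∑ λ*_j + ∑ min (f_i - ξ^i(λ*)) 0 = Z + ∑ ν*_i`.
-/

open Finset

section MasterProblem

variable {ι κ : Type*} [Fintype ι] [Fintype κ] [DecidableEq κ]

theorem sum_sum_sum_mul_eq_sum_mul_coverage (S : ι → Finset (Finset κ)) (lam : κ → ℝ)
    (z : ι → Finset κ → ℝ) :
    ∑ i, ∑ R ∈ S i, (∑ j ∈ R, lam j) * z i R =
      ∑ j, lam j * ∑ i, ∑ R ∈ (S i).filter (fun R => j ∈ R), z i R := by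
  simp only [Finset.mul_sum, Finset.sum_filter, Finset.sum_mul]
  rw [Finset.sum_comm]
  refine Finset.sum_congr rfl fun i _ => ?_
  rw [Finset.sum_comm]
  refine Finset.sum_congr rfl fun R _ => ?_
  simp only [mul_ite, mul_zero]
  rw [Finset.sum_ite_mem, Finset.univ_inter]

theorem sum_le_sum_sum_mul_of_coverage (S : ι → Finset (Finset κ)) {lam : κ → ℝ}
    (hlam : ∀ j, 0 ≤ lam j) {z : ι → Finset κ → ℝ}
    (hcov : ∀ j, 1 ≤ ∑ i, ∑ R ∈ (S i).filter (fun R => j ∈ R), z i R) :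
    ∑ j, lam j ≤ ∑ i, ∑ R ∈ S i, (∑ j ∈ R, lam j) * z i R := by
  rw [sum_sum_sum_mul_eq_sum_mul_coverage]
  exact Finset.sum_le_sum fun j _ => le_mul_of_one_le_right (hlam j) (hcov j)

theorem dual_value_le_primal_cost (S : ι → Finset (Finset κ)) (cost : ι → Finset κ → ℝ)
    {lam : κ → ℝ} {mu : ι → ℝ} (hlam : ∀ j, 0 ≤ lam j) (hmu : ∀ i, 0 ≤ mu i)
    (hdual : ∀ i, ∀ R ∈ S i, ∑ j ∈ R, lam j - mu i ≤ cost i R)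
    {z : ι → Finset κ → ℝ} (hz : ∀ i R, 0 ≤ z i R) (hz1 : ∀ i, ∑ R ∈ S i, z i R ≤ 1)
    (hcov : ∀ j, 1 ≤ ∑ i, ∑ R ∈ (S i).filter (fun R => j ∈ R), z i R) :
    ∑ j, lam j - ∑ i, mu i ≤ ∑ i, ∑ R ∈ S i, cost i R * z i R := by
  have hmu_le : ∑ i, mu i * ∑ R ∈ S i, z i R ≤ ∑ i, mu i :=
    Finset.sum_le_sum fun i _ => mul_le_of_le_one_right (hmu i) (hz1 i)
  have hreduced : ∑ i, ∑ R ∈ S i, (∑ j ∈ R, lam j - mu i) * z i R ≤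
      ∑ i, ∑ R ∈ S i, cost i R * z i R :=
    Finset.sum_le_sum fun i _ => Finset.sum_le_sum fun R hR =>
      mul_le_mul_of_nonneg_right (hdual i R hR) (hz i R)
  have hsplit : ∑ i, ∑ R ∈ S i, (∑ j ∈ R, lam j - mu i) * z i R =
      ∑ i, ∑ R ∈ S i, (∑ j ∈ R, lam j) * z i R - ∑ i, mu i * ∑ R ∈ S i, z i R := by
    simp only [sub_mul, Finset.sum_sub_distrib, Finset.mul_sum]
  linarith [sum_le_sum_sum_mul_of_coverage S hlam hcov]

end MasterProblem

theorem sum_sub_max_le_add_sum_of_sum_sub_le {κ : Type*} (R : Finset κ) (lam c : κ → ℝ) {f xi : ℝ}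
    (hxi : ∑ j ∈ R, (lam j - c j) ≤ xi) :
    ∑ j ∈ R, lam j - max (xi - f) 0 ≤ f + ∑ j ∈ R, c j := by
  rw [Finset.sum_sub_distrib] at hxi
  linarith [le_max_left (xi - f) 0]

theorem add_min_sub_zero_eq_sub_max (mu f xi : ℝ) :
    mu + min (f - xi) 0 = mu - max (xi - f) 0 := by
  rw [sub_eq_add_neg mu, ← min_neg_neg, neg_sub, neg_zero]

theorem stmt8_general {ι κ : Type*} [Fintype ι] [Fintype κ] [DecidableEq κ]
    (S : ι → Finset (Finset κ)) (hSempty : ∀ i, ∅ ∈ S i)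
    (Rfam : ι → Finset (Finset κ))
    (f : ι → ℝ) (c : ι → κ → ℝ)
    (lam : κ → ℝ) (mu : ι → ℝ)
    -- (λ*, μ*) is feasible for the dual of the restricted master problem
    (hfeas : (∀ j, 0 ≤ lam j) ∧ (∀ i, 0 ≤ mu i) ∧
      ∀ i, ∀ R ∈ Rfam i, ∑ j ∈ R, lam j - mu i ≤ f i + ∑ j ∈ R, c i j)
    (Z : ℝ) (hZ : Z = ∑ j, lam j - ∑ i, mu i)
    (xi : ι → ℝ)
    (hxi : ∀ i, xi i = (S i).sup' ⟨∅, hSempty i⟩ (fun R => ∑ j ∈ R, (lam j - c i j)))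
    (nu : ι → ℝ) (hnu : ∀ i, nu i = mu i + min (f i - xi i) 0) :
    ∀ z : ι → Finset κ → ℝ,
      (∀ i R, 0 ≤ z i R) →
      (∀ i, ∑ R ∈ S i, z i R ≤ 1) →
      (∀ j : κ, 1 ≤ ∑ i, ∑ R ∈ (S i).filter (fun R => j ∈ R), z i R) →
      Z + ∑ i, nu i ≤ ∑ i, ∑ R ∈ S i, (f i + ∑ j ∈ R, c i j) * z i R := by
  intro z hz hz1 hcov
  obtain ⟨hlam, -, -⟩ := hfeas
  have hvalue : Z + ∑ i, nu i = ∑ j, lam j - ∑ i, max (xi i - f i) 0 := by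
    simp only [hZ, hnu, add_min_sub_zero_eq_sub_max, Finset.sum_sub_distrib]
    ring
  rw [hvalue]
  refine dual_value_le_primal_cost S _ hlam (fun i => le_max_right _ _) (fun i R hR => ?_)
    hz hz1 hcov
  exact sum_sub_max_le_add_sum_of_sum_sub_le R lam (c i) <| (hxi i).symm ▸
    Finset.le_sup' (fun R => ∑ j ∈ R, (lam j - c i j)) hR

/-- Early-termination lower bound: if `(λ*, μ*)` is an optimal dual solution of
the restricted master problem with value `Z`, then `Z + ∑ ν*` bounds the full
master problem (MP) from below. -/
theorem stmt8 {ι κ : Type*} [Fintype ι] [Fintype κ] [DecidableEq κ]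
    (S : ι → Finset (Finset κ)) (hSempty : ∀ i, ∅ ∈ S i)
    (Rfam : ι → Finset (Finset κ)) (hRsub : ∀ i, Rfam i ⊆ S i)
    (hRempty : ∀ i, ∅ ∈ Rfam i)
    (f : ι → ℝ) (hf : ∀ i, 0 ≤ f i) (c : ι → κ → ℝ)
    (lam : κ → ℝ) (mu : ι → ℝ)
    -- (λ*, μ*) is feasible for the dual of the restricted master problem
    (hfeas : (∀ j, 0 ≤ lam j) ∧ (∀ i, 0 ≤ mu i) ∧
      ∀ i, ∀ R ∈ Rfam i, ∑ j ∈ R, lam j - mu i ≤ f i + ∑ j ∈ R, c i j)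
    -- and optimal among all feasible solutions of that dual
    (hopt : ∀ lam' : κ → ℝ, ∀ mu' : ι → ℝ,
      (∀ j, 0 ≤ lam' j) → (∀ i, 0 ≤ mu' i) →
      (∀ i, ∀ R ∈ Rfam i, ∑ j ∈ R, lam' j - mu' i ≤ f i + ∑ j ∈ R, c i j) →
      ∑ j, lam' j - ∑ i, mu' i ≤ ∑ j, lam j - ∑ i, mu i)
    (Z : ℝ) (hZ : Z = ∑ j, lam j - ∑ i, mu i)
    (xi : ι → ℝ)
    (hxi : ∀ i, xi i = (S i).sup' ⟨∅, hSempty i⟩ (fun R => ∑ j ∈ R, (lam j - c i j)))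
    (nu : ι → ℝ) (hnu : ∀ i, nu i = mu i + min (f i - xi i) 0) :
    ∀ z : ι → Finset κ → ℝ,
      (∀ i R, 0 ≤ z i R) →
      (∀ i, ∑ R ∈ S i, z i R ≤ 1) →
      (∀ j : κ, 1 ≤ ∑ i, ∑ R ∈ (S i).filter (fun R => j ∈ R), z i R) →
      Z + ∑ i, nu i ≤ ∑ i, ∑ R ∈ S i, (f i + ∑ j ∈ R, c i j) * z i R :=
  stmt8_general S hSempty Rfam f c lam mu hfeas Z hZ xi hxi nu hnu
end

section
/- Fix i in M and j in N with S^{ij} = { R in S^i : j in R } nonempty. Let (lambda*, mu*) be feasible for DMP and let xi^{ij} = max_{R in S^{ij}} sum_{k in R} (lambda*_k - c_{ik}). Set delta*_{ij} = -xi^{ij} + f_i + mu*_i. Then (lambda*, mu*, delta*_{ij}) is feasible for the dual of MP augmented with the coupling constraint -x_{ij} + sum_{R in S^{ij}} z_R^i = 0, x_{ij} >= 0; that is: delta*_{ij} >= 0, delta*_{ij} + sum_{k in R} lambda*_k - mu*_i <= c_R^i for all R in S^{ij}, and sum_{k in R} lambda*_k - mu*_i <= c_R^i for all R in S^i \ S^{ij}.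 -/
open Finset

theorem sum_sub_le_add_iff {κ : Type*} (R : Finset κ) (lam c : κ → ℝ) (f mu : ℝ) :
    ∑ k ∈ R, (lam k - c k) ≤ f + mu ↔ ∑ k ∈ R, lam k - mu ≤ f + ∑ k ∈ R, c k := by
  rw [sum_sub_distrib]
  constructor <;> intro h <;> linarith

theorem stmt9_general {ι κ : Type*} [DecidableEq κ]
    (S : ι → Finset (Finset κ))
    (f : ι → ℝ) (c : ι → κ → ℝ)
    (lam : κ → ℝ) (mu : ι → ℝ)
    (hfeas : ∀ i', ∀ R ∈ S i', ∑ k ∈ R, lam k - mu i' ≤ f i' + ∑ k ∈ R, c i' k)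
    (i : ι) (j : κ)
    (hne : ((S i).filter (fun R => j ∈ R)).Nonempty)
    (xiij : ℝ)
    (hxiij : xiij = ((S i).filter (fun R => j ∈ R)).sup' hne
      (fun R => ∑ k ∈ R, (lam k - c i k)))
    (delta : ℝ) (hdelta : delta = -xiij + f i + mu i) :
    0 ≤ delta ∧
      (∀ R ∈ (S i).filter (fun R => j ∈ R),
        delta + ∑ k ∈ R, lam k - mu i ≤ f i + ∑ k ∈ R, c i k) ∧
      (∀ R ∈ S i, j ∉ R → ∑ k ∈ R, lam k - mu i ≤ f i + ∑ k ∈ R, c i k) := by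
  refine ⟨?_, fun R hR => ?_, fun R hR _ => hfeas i R hR⟩
  · have hxi_le : xiij ≤ f i + mu i := hxiij ▸ sup'_le hne _ fun R hR =>
      (sum_sub_le_add_iff R lam (c i) (f i) (mu i)).2 (hfeas i R (mem_filter.1 hR).1)
    linarith
  · have hprofit : ∑ k ∈ R, lam k - ∑ k ∈ R, c i k ≤ xiij := by
      rw [← sum_sub_distrib, hxiij]
      exact le_sup' (fun R => ∑ k ∈ R, (lam k - c i k)) hR
    linarith

/-- Proposition 4: the reduced cost `δ*_{ij} = -ξ^{ij} + f_i + μ*_i` yields a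
feasible dual solution of MP augmented with the coupling constraint for
`x_{ij}`. -/
theorem stmt9 {ι κ : Type*} [DecidableEq κ]
    (S : ι → Finset (Finset κ))
    (f : ι → ℝ) (c : ι → κ → ℝ)
    (lam : κ → ℝ) (mu : ι → ℝ)
    (hlam : ∀ k, 0 ≤ lam k) (hmu : ∀ i', 0 ≤ mu i')
    (hfeas : ∀ i', ∀ R ∈ S i', ∑ k ∈ R, lam k - mu i' ≤ f i' + ∑ k ∈ R, c i' k)
    (i : ι) (j : κ)
    (hne : ((S i).filter (fun R => j ∈ R)).Nonempty)
    (xiij : ℝ)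
    (hxiij : xiij = ((S i).filter (fun R => j ∈ R)).sup' hne
      (fun R => ∑ k ∈ R, (lam k - c i k)))
    (delta : ℝ) (hdelta : delta = -xiij + f i + mu i) :
    0 ≤ delta ∧
      (∀ R ∈ (S i).filter (fun R => j ∈ R),
        delta + ∑ k ∈ R, lam k - mu i ≤ f i + ∑ k ∈ R, c i k) ∧
      (∀ R ∈ S i, j ∉ R → ∑ k ∈ R, lam k - mu i ≤ f i + ∑ k ∈ R, c i k) :=
  stmt9_general S f c lam mu hfeas i j hne xiij hxiij delta hdelta
end

section
/- Fix i in M. Let (lambda*, mu*) be feasible for DMP with xi^i = max_{R in S^i} sum_{k in R}(lambda*_k - c_{ik}), and set rho*_i = -xi^i + f_i + mu*_i. Then rho*_i >= 0 and rho*_i + sum_{k in R} lambda*_k - mu*_i <= c_R^i for all R in S^i; i.e., (lambda*, mu*, rho*_i) is feasible for the dual of MP augmented with the coupling constraint -y_i + sum_{R in S^i} z_R^i = 0, y_i >= 0. -/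
open Finset

theorem stmt10_general {ι κ : Type*}
    (S : ι → Finset (Finset κ)) (hSempty : ∀ i', ∅ ∈ S i')
    (f : ι → ℝ) (c : ι → κ → ℝ)
    (lam : κ → ℝ) (mu : ι → ℝ)
    (hfeas : ∀ i', ∀ R ∈ S i', ∑ k ∈ R, lam k - mu i' ≤ f i' + ∑ k ∈ R, c i' k)
    (i : ι) (xi : ℝ)
    (hxi : xi = (S i).sup' ⟨∅, hSempty i⟩ (fun R => ∑ k ∈ R, (lam k - c i k)))
    (rho : ℝ) (hrho : rho = -xi + f i + mu i) :
    0 ≤ rho ∧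
      ∀ R ∈ S i, rho + ∑ k ∈ R, lam k - mu i ≤ f i + ∑ k ∈ R, c i k := by
  subst hrho
  have hprofit_le : ∀ R ∈ S i, ∑ k ∈ R, (lam k - c i k) ≤ f i + mu i := fun R hR => by
    have := hfeas i R hR
    rw [sum_sub_distrib]
    linarith
  have hxi_le : xi ≤ f i + mu i := hxi ▸ sup'_le _ _ hprofit_le
  refine ⟨by linarith, fun R hR => ?_⟩
  have hle_xi : ∑ k ∈ R, (lam k - c i k) ≤ xi :=
    hxi ▸ le_sup' (fun R => ∑ k ∈ R, (lam k - c i k)) hR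
  rw [sum_sub_distrib] at hle_xi
  linarith

/-- Proposition 5: the reduced cost `ρ*_i = -ξ^i + f_i + μ*_i` of the
facility-open variable `y_i` yields a feasible dual solution of MP augmented
with the coupling constraint for `y_i`. -/
theorem stmt10 {ι κ : Type*}
    (S : ι → Finset (Finset κ)) (hSempty : ∀ i', ∅ ∈ S i')
    (f : ι → ℝ) (c : ι → κ → ℝ)
    (lam : κ → ℝ) (mu : ι → ℝ)
    (hlam : ∀ k, 0 ≤ lam k) (hmu : ∀ i', 0 ≤ mu i')
    (hfeas : ∀ i', ∀ R ∈ S i', ∑ k ∈ R, lam k - mu i' ≤ f i' + ∑ k ∈ R, c i' k)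
    (i : ι) (xi : ℝ)
    (hxi : xi = (S i).sup' ⟨∅, hSempty i⟩ (fun R => ∑ k ∈ R, (lam k - c i k)))
    (rho : ℝ) (hrho : rho = -xi + f i + mu i) :
    0 ≤ rho ∧
      ∀ R ∈ S i, rho + ∑ k ∈ R, lam k - mu i ≤ f i + ∑ k ∈ R, c i k :=
  stmt10_general S hSempty f c lam mu hfeas i xi hxi rho hrho
end
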